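/- Let Γ = (S, A, Ω, p, u) be an information aggregation game with n senders and let k be a positive integer with 2k < n. Then an outcome o : Ω → Δ(A) of Γ is implementable by a k-resilient truthful mechanism if and only if E_r(o) ≥ U_a for every action a ∈ A. -/

import Mathlib

open Finset

/-- An information aggregation game with `n` senders and finite state space `Ω`.
The binary action set `A = {0,1}` is modelled by `Bool` (`false` = action `0`,
`true` = action `1`).  Player `some i` is sender `i`; player `none` is the
receiver. -/
structure IAGame (n : ℕ) (Ω : Type*) [Fintype Ω] where
  /-- the (commonly known) prior distribution on states -/
  p : Ω → ℝ
  p_nonneg : ∀ ω, 0 ≤ p ω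
  p_sum_one : ∑ ω, p ω = 1
  /-- `u j ω a` : utility of player `j` when action `a` is played at state `ω` -/
  u : Option (Fin n) → Ω → Bool → ℝ

/-- A mechanism for an information aggregation game: (possibly randomized)
sender strategies (`send i ω m` is the probability that sender `i` reports
message `m` when the state is `ω`), a (possibly randomized) mediator rule
(`med m` is the probability that the mediator recommends action `0` on the
message profile `m`; action `1` is recommended with the remaining
probability), and a receiver strategy `recv` mapping the mediator's
recommendation to the action actually played. -/
structure Mech (n : ℕ) (Ω : Type*) [Fintype Ω] where
  send : Fin n → Ω → Ω → ℝ
  send_nonneg : ∀ i ω m, 0 ≤ send i ω m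
  send_sum_one : ∀ i ω, ∑ m, send i ω m = 1
  med : (Fin n → Ω) → ℝ
  med_nonneg : ∀ m, 0 ≤ med m
  med_le_one : ∀ m, med m ≤ 1
  recv : Bool → Bool

variable {n : ℕ} {Ω : Type*} [Fintype Ω] [DecidableEq Ω]

namespace Mech

/-- Probability that the action finally played by the receiver is `0`
(= `false`), given that the mediator received the message profile `m`. -/
def actFalse (M : Mech n Ω) (m : Fin n → Ω) : ℝ :=
  (if M.recv false = false then M.med m else 0) +
  (if M.recv true = false then 1 - M.med m else 0)

/-- Probability that the message profile `m` is sent when the state is `ω`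
(the senders randomize independently). -/
def profProb (M : Mech n Ω) (ω : Ω) (m : Fin n → Ω) : ℝ :=
  ∏ i, M.send i ω (m i)

/-- The outcome implemented by a mechanism: `M.out ω` is the probability that
the action finally played is `0` at state `ω`.  (Since `A = {0,1}`, a
distribution on `A` is identified with the probability it gives to `0`, so
`M.out : Ω → ℝ` faithfully represents the map `o_M : Ω → Δ(A)`.) -/
def out (M : Mech n Ω) (ω : Ω) : ℝ :=
  ∑ m : Fin n → Ω, M.profProb ω m * M.actFalse m

/-- The mechanism in which the receiver unilaterally deviates to strategy `g`. -/
def withRecv (M : Mech n Ω) (g : Bool → Bool) : Mech n Ω :=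
  { M with recv := g }

/-- The mechanism in which sender `i` unilaterally deviates to the (possibly
randomized) strategy `s`. -/
def devSend (M : Mech n Ω) (i : Fin n) (s : Ω → Ω → ℝ)
    (h1 : ∀ ω m, 0 ≤ s ω m) (h2 : ∀ ω, ∑ m, s ω m = 1) : Mech n Ω where
  send := fun j => if j = i then s else M.send j
  send_nonneg := by
    intro j ω m
    by_cases h : j = i
    · simpa [h] using h1 ω m
    · simpa [h] using M.send_nonneg j ω m
  send_sum_one := by
    intro j ω
    by_cases h : j = i
    · simpa [h] using h2 ω
    · simpa [h] using M.send_sum_one j ω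
  med := M.med
  med_nonneg := M.med_nonneg
  med_le_one := M.med_le_one
  recv := M.recv

/-- A mechanism is honest if every sender truthfully reports the state with
probability one and the receiver plays the mediator's recommendation. -/
def Honest (M : Mech n Ω) : Prop :=
  (∀ i ω m, M.send i ω m = if m = ω then 1 else 0) ∧ M.recv = id

end Mech

namespace IAGame

/-- Expected utility of player `j` at state `ω` when action `0` is played with
probability `q` (and action `1` with probability `1 - q`). -/
def lin (G : IAGame n Ω) (j : Option (Fin n)) (ω : Ω) (q : ℝ) : ℝ :=
  q * G.u j ω false + (1 - q) * G.u j ω true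

/-- `U_a` : the receiver's expected utility from always playing action `a`. -/
def Uconst (G : IAGame n Ω) (a : Bool) : ℝ :=
  ∑ ω, G.p ω * G.u none ω a

/-- `E_j(o)` : expected utility of player `j` under the outcome `o`, where
`o ω` is the probability that action `0` is played at state `ω`. -/
def EUout (G : IAGame n Ω) (j : Option (Fin n)) (o : Ω → ℝ) : ℝ :=
  ∑ ω, G.p ω * G.lin j ω (o ω)

/-- Expected utility of player `j` when the mechanism `M` is played. -/
def EU (G : IAGame n Ω) (M : Mech n Ω) (j : Option (Fin n)) : ℝ :=
  ∑ ω, G.p ω * ∑ m : Fin n → Ω, M.profProb ω m * G.lin j ω (M.actFalse m)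

/-- A mechanism is incentive-compatible if neither the receiver nor any single
sender can strictly increase its expected utility by unilaterally deviating
(the mediator's rule being fixed). -/
def IC (G : IAGame n Ω) (M : Mech n Ω) : Prop :=
  (∀ g : Bool → Bool, G.EU (M.withRecv g) none ≤ G.EU M none) ∧
  (∀ (i : Fin n) (s : Ω → Ω → ℝ) (h1 : ∀ ω m, 0 ≤ s ω m)
      (h2 : ∀ ω, ∑ m, s ω m = 1),
      G.EU (M.devSend i s h1 h2) (some i) ≤ G.EU M (some i))

/-- A mechanism is truthful if it is honest and incentive-compatible. -/
def Truthful (G : IAGame n Ω) (M : Mech n Ω) : Prop :=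
  M.Honest ∧ G.IC M

/-- The honest reporting distribution on message profiles: at state `ω` the
profile `(ω, …, ω)` is sent with probability one. -/
def honestRep : Ω → (Fin n → Ω) → ℝ :=
  fun ω m => if m = (fun _ => ω) then 1 else 0

/-- `τ` is a valid joint (possibly randomized, possibly correlated) deviation
of the coalition `K` from honest reporting: `τ ω` is a probability
distribution on message profiles, and senders outside `K` keep reporting the
true state. -/
def IsDev (K : Finset (Fin n)) (τ : Ω → (Fin n → Ω) → ℝ) : Prop :=
  (∀ ω m, 0 ≤ τ ω m) ∧ (∀ ω, ∑ m : Fin n → Ω, τ ω m = 1) ∧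
  (∀ ω m, τ ω m ≠ 0 → ∀ i, i ∉ K → m i = ω)

/-- Expected utility of sender `i` when the senders' reports are distributed
according to `τ`, the mediator uses the rule `f` (`f m` = probability of
recommending action `0` on the message profile `m`) and the receiver obeys the
mediator's recommendation. -/
def senderEU (G : IAGame n Ω) (f : (Fin n → Ω) → ℝ) (i : Fin n)
    (τ : Ω → (Fin n → Ω) → ℝ) : ℝ :=
  ∑ ω, G.p ω * ∑ m : Fin n → Ω, τ ω m * G.lin (some i) ω (f m)

/-- The honest mechanism with mediator rule `f` is `k`-resilient
incentive-compatible for the senders: no (nonempty) coalition of at most `k`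
senders has a joint deviation strictly increasing the expected utility of
every member; i.e., for every coalition and every deviation, some member of
the coalition does not strictly increase its expected utility. -/
def KResSenders (G : IAGame n Ω) (f : (Fin n → Ω) → ℝ) (k : ℕ) : Prop :=
  ∀ K : Finset (Fin n), K.Nonempty → K.card ≤ k →
    ∀ τ : Ω → (Fin n → Ω) → ℝ, IsDev K τ →
      ∃ i ∈ K, G.senderEU f i τ ≤ G.senderEU f i honestRep

/-- The honest mechanism with mediator rule `f` is strong `k`-resilient
incentive-compatible for the senders: for every (nonempty) coalition of at
most `k` senders and every joint deviation, no member of the coalition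
strictly increases its expected utility. -/
def StrongKResSenders (G : IAGame n Ω) (f : (Fin n → Ω) → ℝ) (k : ℕ) : Prop :=
  ∀ K : Finset (Fin n), K.Nonempty → K.card ≤ k →
    ∀ τ : Ω → (Fin n → Ω) → ℝ, IsDev K τ →
      ∀ i ∈ K, G.senderEU f i τ ≤ G.senderEU f i honestRep

/-- A (honest) mechanism is `k`-resilient incentive-compatible if (a) the
receiver cannot strictly increase its expected utility by deviating, and
(b) the senders' honest strategy profile is a `k`-resilient Nash equilibrium
(with the mediator rule and the receiver strategy fixed). -/
def KResIC (G : IAGame n Ω) (M : Mech n Ω) (k : ℕ) : Prop :=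
  (∀ g : Bool → Bool, G.EU (M.withRecv g) none ≤ G.EU M none) ∧
  G.KResSenders M.med k

/-- Strong `k`-resilient incentive compatibility. -/
def StrongKResIC (G : IAGame n Ω) (M : Mech n Ω) (k : ℕ) : Prop :=
  (∀ g : Bool → Bool, G.EU (M.withRecv g) none ≤ G.EU M none) ∧
  G.StrongKResSenders M.med k

/-- A mechanism is `k`-resilient truthful if it is honest and `k`-resilient
incentive-compatible. -/
def KResTruthful (G : IAGame n Ω) (M : Mech n Ω) (k : ℕ) : Prop :=
  M.Honest ∧ G.KResIC M k

/-- A mechanism is strong `k`-resilient truthful if it is honest and strong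
`k`-resilient incentive-compatible. -/
def StrongKResTruthful (G : IAGame n Ω) (M : Mech n Ω) (k : ℕ) : Prop :=
  M.Honest ∧ G.StrongKResIC M k

/-- Sender `i` strictly prefers action `a` to the other action in state `ω`. -/
def SPrefers (G : IAGame n Ω) (i : Fin n) (ω : Ω) (a : Bool) : Prop :=
  G.u (some i) ω (!a) < G.u (some i) ω a

/-- Sender `i` weakly prefers action `a` to the other action in state `ω`. -/
def WPrefers (G : IAGame n Ω) (i : Fin n) (ω : Ω) (a : Bool) : Prop :=
  G.u (some i) ω (!a) ≤ G.u (some i) ω a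

end IAGame

/-- `C(m, m')` : the set of senders whose messages differ in the two message
profiles `m` and `m'`. -/
def diffSet (m m' : Fin n → Ω) : Finset (Fin n) :=
  univ.filter fun i => m i ≠ m' i

namespace IAGame

/-- The relation `m ≺ₖ m'` : the set `C` of senders whose messages differ has
size at most `k`, and either (a) `m` is `ω`-pure for some `ω` and every sender
in `C` strictly prefers action `1` to action `0` in state `ω`, or (b) `m'` is
`ω`-pure for some `ω` and every sender in `C` strictly prefers action `0` to
action `1` in state `ω`. -/
def Prec (G : IAGame n Ω) (k : ℕ) (m m' : Fin n → Ω) : Prop :=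
  (diffSet m m').card ≤ k ∧
  ((∃ ω : Ω, m = (fun _ => ω) ∧ ∀ i ∈ diffSet m m', G.SPrefers i ω true) ∨
   (∃ ω : Ω, m' = (fun _ => ω) ∧ ∀ i ∈ diffSet m m', G.SPrefers i ω false))

/-- The relation `m ≺ₖˢ m'` (the strong variant): the set `C` of senders whose
messages differ has size at most `k`, and either (a) `m` is `ω`-pure for some
`ω` and at least one sender in `C` strictly prefers `1` to `0` in `ω`, or (b)
`m'` is `ω`-pure for some `ω` and at least one sender in `C` strictly prefers
`0` to `1` in `ω`. -/
def PrecS (G : IAGame n Ω) (k : ℕ) (m m' : Fin n → Ω) : Prop :=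
  (diffSet m m').card ≤ k ∧
  ((∃ ω : Ω, m = (fun _ => ω) ∧ ∃ i ∈ diffSet m m', G.SPrefers i ω true) ∨
   (∃ ω : Ω, m' = (fun _ => ω) ∧ ∃ i ∈ diffSet m m', G.SPrefers i ω false))

/-- `ω ≤ₖ ω'` : there is a chain `ω⃗ ≺ₖ m⃗¹ ≺ₖ ⋯ ≺ₖ m⃗ᵗ ≺ₖ ω⃗'` from the
`ω`-pure input to the `ω'`-pure input. -/
def LeK (G : IAGame n Ω) (k : ℕ) (ω ω' : Ω) : Prop :=
  Relation.TransGen (G.Prec k) (fun _ => ω) (fun _ => ω')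

/-- `ω ≤ₖˢ ω'` : the strong variant of `≤ₖ`. -/
def LeKS (G : IAGame n Ω) (k : ℕ) (ω ω' : Ω) : Prop :=
  Relation.TransGen (G.PrecS k) (fun _ => ω) (fun _ => ω')

end IAGame

/-
A mediator that recommends action `0` with probability `o ω`, where `ω` is the state reported by
at least `n - k` senders, cannot be manipulated by a coalition of at most `k` senders: since
`2k < n` such a state is unique, and the senders outside the coalition still report the true one.
So no deviation changes anybody's payoff. On the receiver's side, the four strategies
`Bool → Bool` yield `E_r(o)`, `U_0`, `U_1` and `U_0 + U_1 - E_r(o)`, so obeying is optimal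
exactly when `E_r(o) ≥ U_a` for both actions `a`.
-/

theorem IAGame.sum_honestRep_mul (ω : Ω) (F : (Fin n → Ω) → ℝ) :
    ∑ m, IAGame.honestRep ω m * F m = F fun _ => ω := by
  simp [IAGame.honestRep]

namespace Mech

omit [DecidableEq Ω] in
theorem sum_profProb (M : Mech n Ω) (ω : Ω) : ∑ m : Fin n → Ω, M.profProb ω m = 1 := by
  simp only [profProb, ← Fintype.prod_sum, M.send_sum_one, prod_const_one]

theorem profProb_eq_honestRep (M : Mech n Ω)
    (hM : ∀ i ω m, M.send i ω m = if m = ω then 1 else 0) :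
    M.profProb = IAGame.honestRep := by
  funext ω m
  simp [profProb, IAGame.honestRep, hM, Fintype.prod_boole, funext_iff]

theorem out_of_honestSend (M : Mech n Ω)
    (hM : ∀ i ω m, M.send i ω m = if m = ω then 1 else 0) (ω : Ω) :
    M.out ω = M.actFalse fun _ => ω := by
  rw [out, profProb_eq_honestRep M hM, IAGame.sum_honestRep_mul]

omit [DecidableEq Ω] in
theorem actFalse_of_recv_eq_id (M : Mech n Ω) (hM : M.recv = id) (m : Fin n → Ω) :
    M.actFalse m = M.med m := by
  simp [actFalse, hM]

omit [DecidableEq Ω] in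
theorem withRecv_recv (M : Mech n Ω) : M.withRecv M.recv = M := rfl

end Mech

namespace IAGame

omit [DecidableEq Ω]

variable (G : IAGame n Ω)

theorem lin_eq (j : Option (Fin n)) (ω : Ω) (q : ℝ) :
    G.lin j ω q = G.u j ω true + q * (G.u j ω false - G.u j ω true) := by
  unfold lin; ring

theorem sum_mul_lin {ι : Type*} [Fintype ι] (j : Option (Fin n)) (ω : Ω) {π : ι → ℝ}
    (hπ : ∑ x, π x = 1) (q : ι → ℝ) :
    ∑ x, π x * G.lin j ω (q x) = G.lin j ω (∑ x, π x * q x) := by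
  simp only [lin_eq, mul_add, sum_add_distrib, ← mul_assoc, ← sum_mul, hπ, one_mul]

theorem EU_eq_EUout_out (M : Mech n Ω) (j : Option (Fin n)) : G.EU M j = G.EUout j M.out := by
  simp only [EU, EUout, Mech.out, G.sum_mul_lin j _ (M.sum_profProb _)]

theorem EU_withRecv_const (M : Mech n Ω) (a : Bool) :
    G.EU (M.withRecv fun _ => a) none = G.Uconst a := by
  have hlin : ∀ ω m, G.lin none ω ((M.withRecv fun _ => a).actFalse m) = G.u none ω a := by
    intro ω m
    cases a <;> simp [lin, Mech.actFalse, Mech.withRecv]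
  simp only [EU, hlin, ← sum_mul, Mech.sum_profProb, one_mul, Uconst]

theorem lin_one_sub (j : Option (Fin n)) (ω : Ω) (q : ℝ) :
    G.lin j ω (1 - q) = G.u j ω false + G.u j ω true - G.lin j ω q := by
  unfold lin; ring

theorem EU_withRecv_not (M : Mech n Ω) (hM : M.recv = id) :
    G.EU (M.withRecv not) none = G.Uconst false + G.Uconst true - G.EU M none := by
  have hout : ∀ ω, (M.withRecv not).out ω = 1 - M.out ω := by
    intro ω
    have hact : ∀ m, (M.withRecv not).actFalse m = 1 - M.actFalse m := by
      simp [Mech.actFalse, Mech.withRecv, hM]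
    simp only [Mech.out, hact, mul_sub, mul_one, sum_sub_distrib, Mech.sum_profProb]
    rfl
  simp only [EU_eq_EUout_out, EUout, Uconst, hout, lin_one_sub, mul_sub, mul_add,
    sum_sub_distrib, sum_add_distrib]

theorem receiverIC_iff (M : Mech n Ω) (hM : M.recv = id) :
    (∀ g, G.EU (M.withRecv g) none ≤ G.EU M none) ↔ ∀ a, G.Uconst a ≤ G.EU M none := by
  refine ⟨fun h a => G.EU_withRecv_const M a ▸ h fun _ => a, fun h g => ?_⟩
  have hg : g = (fun _ => g false) ∨ g = id ∨ g = not := by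
    cases hf : g false <;> cases ht : g true <;> simp [funext_iff, Bool.forall_bool, hf, ht]
  rcases hg with hg | rfl | rfl
  · rw [hg, EU_withRecv_const]
    exact h _
  · rw [← hM, M.withRecv_recv]
  · rw [G.EU_withRecv_not M hM]
    linarith [h false, h true]

end IAGame

noncomputable def majorityRule (k : ℕ) (o : Ω → ℝ) (m : Fin n → Ω) : ℝ :=
  if h : ∃ ω, n - k ≤ #{i | m i = ω} then o h.choose else 0

omit [Fintype Ω] in
theorem eq_of_le_card_filter {k : ℕ} (hkn : 2 * k < n) {m : Fin n → Ω} {ω ω' : Ω}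
    (h : n - k ≤ #{i | m i = ω}) (h' : n - k ≤ #{i | m i = ω'}) : ω = ω' := by
  obtain ⟨i, hi⟩ := inter_nonempty_of_card_lt_card_add_card (subset_univ _) (subset_univ _)
    (by rw [card_univ, Fintype.card_fin]; omega :
      #univ < #{i | m i = ω} + #{i | m i = ω'})
  simp only [mem_inter, mem_filter, mem_univ, true_and] at hi
  exact hi.1.symm.trans hi.2

theorem majorityRule_eq {k : ℕ} (hkn : 2 * k < n) (o : Ω → ℝ) {K : Finset (Fin n)}
    (hK : #K ≤ k) {m : Fin n → Ω} {ω : Ω} (hm : ∀ i ∉ K, m i = ω) :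
    majorityRule k o m = o ω := by
  have hcard : n - k ≤ #{i | m i = ω} := calc
    n - k ≤ #Kᶜ := by rw [card_compl, Fintype.card_fin]; omega
    _ ≤ #{i | m i = ω} := card_le_card fun i hi => by simpa using hm i (mem_compl.1 hi)
  have hex : ∃ ω, n - k ≤ #{i | m i = ω} := ⟨ω, hcard⟩
  rw [majorityRule, dif_pos hex, eq_of_le_card_filter hkn hex.choose_spec hcard]

noncomputable def majorityMech (k : ℕ) (o : Ω → ℝ) (ho0 : ∀ ω, 0 ≤ o ω) (ho1 : ∀ ω, o ω ≤ 1) :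
    Mech n Ω where
  send _ ω m := if m = ω then 1 else 0
  send_nonneg _ ω m := by split_ifs <;> norm_num
  send_sum_one _ ω := by simp
  med := majorityRule k o
  med_nonneg m := by
    unfold majorityRule
    split_ifs
    exacts [ho0 _, le_rfl]
  med_le_one m := by
    unfold majorityRule
    split_ifs
    exacts [ho1 _, zero_le_one]
  recv := id

section majorityMech

variable {k : ℕ} {o : Ω → ℝ} (ho0 : ∀ ω, 0 ≤ o ω) (ho1 : ∀ ω, o ω ≤ 1)

theorem majorityMech_honest : (majorityMech k o ho0 ho1 : Mech n Ω).Honest :=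
  ⟨fun _ _ _ => rfl, rfl⟩

theorem majorityMech_out (hkn : 2 * k < n) : (majorityMech k o ho0 ho1 : Mech n Ω).out = o := by
  funext ω
  rw [Mech.out_of_honestSend _ (majorityMech_honest ho0 ho1).1,
    Mech.actFalse_of_recv_eq_id _ rfl]
  exact majorityRule_eq hkn o (K := ∅) (by simp) fun _ _ => rfl

end majorityMech

namespace IAGame

theorem isDev_empty_honestRep : IsDev (∅ : Finset (Fin n)) (honestRep (Ω := Ω)) := by
  refine ⟨fun ω m => ?_, fun ω => by simp [honestRep], fun ω m hm i _ => ?_⟩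
  · unfold honestRep
    split_ifs <;> norm_num
  · unfold honestRep at hm
    simp only [ne_eq, ite_eq_right_iff, one_ne_zero, imp_false, not_not] at hm
    rw [hm]

theorem senderEU_majorityRule (G : IAGame n Ω) {k : ℕ} (hkn : 2 * k < n) (o : Ω → ℝ)
    {K : Finset (Fin n)} (hK : #K ≤ k) {τ : Ω → (Fin n → Ω) → ℝ} (hτ : IsDev K τ) (i : Fin n) :
    G.senderEU (majorityRule k o) i τ = G.EUout (some i) o := by
  refine sum_congr rfl fun ω _ => congrArg (G.p ω * ·) ?_
  calc ∑ m, τ ω m * G.lin (some i) ω (majorityRule k o m)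
      = ∑ m, τ ω m * G.lin (some i) ω (o ω) := sum_congr rfl fun m _ => by
        by_cases hm : τ ω m = 0
        · simp [hm]
        · rw [majorityRule_eq hkn o hK (hτ.2.2 ω m hm)]
    _ = G.lin (some i) ω (o ω) := by rw [← sum_mul, hτ.2.1, one_mul]

theorem strongKResSenders_majorityRule (G : IAGame n Ω) {k : ℕ} (hkn : 2 * k < n)
    (o : Ω → ℝ) : G.StrongKResSenders (majorityRule k o) k := fun _ _ hK _ hτ i _ => by
  rw [G.senderEU_majorityRule hkn o hK hτ,
    G.senderEU_majorityRule hkn o (by simp) isDev_empty_honestRep]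

theorem StrongKResSenders.kResSenders {G : IAGame n Ω} {f : (Fin n → Ω) → ℝ} {k : ℕ}
    (h : G.StrongKResSenders f k) : G.KResSenders f k := fun K ⟨i, hi⟩ hK τ hτ =>
  ⟨i, hi, h K ⟨i, hi⟩ hK τ hτ i hi⟩

end IAGame

theorem statement3_general {n : ℕ} {Ω : Type*} [Fintype Ω] [DecidableEq Ω]
    (G : IAGame n Ω) (k : ℕ) (hkn : 2 * k < n)
    (o : Ω → ℝ) (ho0 : ∀ ω, 0 ≤ o ω) (ho1 : ∀ ω, o ω ≤ 1) :
    (∃ M : Mech n Ω, G.KResTruthful M k ∧ M.out = o) ↔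
      (∀ a : Bool, G.Uconst a ≤ G.EUout none o) := by
  constructor
  · rintro ⟨M, ⟨⟨-, hrecv⟩, hreceiver, -⟩, rfl⟩
    rw [← G.EU_eq_EUout_out]
    exact (G.receiverIC_iff M hrecv).1 hreceiver
  · intro h
    refine ⟨majorityMech k o ho0 ho1, ⟨majorityMech_honest ho0 ho1, ?_,
      (G.strongKResSenders_majorityRule hkn o).kResSenders⟩, majorityMech_out ho0 ho1 hkn⟩
    rw [G.receiverIC_iff _ rfl, G.EU_eq_EUout_out, majorityMech_out ho0 ho1 hkn]
    exact h

/-- In an information aggregation game with `n` senders, if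
`k ≥ 1` and `2k < n`, an outcome `o` is implementable by a `k`-resilient
truthful mechanism if and only if `E_r(o) ≥ U_a` for every action `a`. -/
theorem statement3 {n : ℕ} {Ω : Type*} [Fintype Ω] [DecidableEq Ω]
    (G : IAGame n Ω) (k : ℕ) (hk : 1 ≤ k) (hkn : 2 * k < n)
    (o : Ω → ℝ) (ho0 : ∀ ω, 0 ≤ o ω) (ho1 : ∀ ω, o ω ≤ 1) :
    (∃ M : Mech n Ω, G.KResTruthful M k ∧ M.out = o) ↔
      (∀ a : Bool, G.Uconst a ≤ G.EUout none o) :=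
  statement3_general G k hkn o ho0 ho1
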